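/- Let (Ω, 𝔽, ℙ) be a probability space, H a separable complex Hilbert space, and (Ψ_k)_{k∈ℕ} an i.i.d. sequence of strongly measurable random operators on H taking values in positive contractions, satisfying the coercivity condition 𝔼‖Ψ_k x‖² ≥ C‖x‖² for all x ∈ H with a constant 0 < C < 1. Then for every x ∈ H, lim_{n→∞} 𝔼‖ x − Σ_{k=1}^{n} Ψ_k (I − Ψ_{k−1})⋯(I − Ψ₁) x ‖² = 0; that is, the partial sums converge to x in L²(Ω, H). -/

import Mathlib

open MeasureTheory ProbabilityTheory Filter

/-- The σ-algebra on `B(H)` generated by the point evaluations `T ↦ T x`, i.e. the σ-algebra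
corresponding to measurability in the strong operator sense. -/
noncomputable def strongMS (H : Type*) [NormedAddCommGroup H] [InnerProductSpace ℂ H] :
    MeasurableSpace (H →L[ℂ] H) :=
  ⨆ x : H, (borel H).comap fun T => T x

/-- The residual products `R₀ = I`, `R_n(ω) = (I - Ψ_n(ω))⋯(I - Ψ₁(ω))`.
Random operators are indexed starting from `1`, i.e. `Ψ 1, Ψ 2, …`. -/
noncomputable def residualProd {Ω H : Type*} [NormedAddCommGroup H] [InnerProductSpace ℂ H]
    (Ψ : ℕ → Ω → (H →L[ℂ] H)) (ω : Ω) : ℕ → (H →L[ℂ] H)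
  | 0 => 1
  | n + 1 => (1 - Ψ (n + 1) ω) * residualProd Ψ ω n

/-!
Write `R_n = (I - Ψ_n)⋯(I - Ψ₁)`. The partial sums telescope: `x - Σ_{k ≤ n} Ψ_k R_{k-1} x = R_n x`.
A positive contraction `T` satisfies `T² ≤ T`, because `T - T² = T (I - T) T + (I - T) T (I - T)`;
hence `‖y - T y‖² + ‖T y‖² ≤ ‖y‖²`, and with `y = R_n x`,
`𝔼‖R_{n+1} x‖² + 𝔼‖Ψ_{n+1} R_n x‖² ≤ 𝔼‖R_n x‖²`. Since `R_n x` is a function of `Ψ₁, …, Ψ_n`, it is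
independent of `Ψ_{n+1}`, so integrating the coercivity bound against the law of `R_n x` gives
`𝔼‖Ψ_{n+1} R_n x‖² ≥ C 𝔼‖R_n x‖²`. Therefore `𝔼‖R_n x‖² ≤ (1 - C)ⁿ ‖x‖² → 0`.
-/

open ContinuousLinearMap RCLike
open scoped InnerProductSpace ENNReal

theorem ENNReal.tendsto_atTop_zero_of_add_le_of_mul_le {u v : ℕ → ℝ≥0∞} {r : ℝ≥0∞}
    (hr : r ≠ 0) (hu : u 0 ≠ ∞) (hdecr : ∀ n, u (n + 1) + v n ≤ u n)
    (hv : ∀ n, r * u n ≤ v n) : Tendsto u atTop (nhds 0) := by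
  have hstep (n : ℕ) : u (n + 1) ≤ (1 - r) * u n := by
    have hn : u n ≠ ∞ := ne_top_of_le_ne_top hu
      (antitone_nat_of_succ_le (fun n => le_of_add_le_left (hdecr n)) n.zero_le)
    calc u (n + 1) ≤ u n - v n :=
          ENNReal.le_sub_of_add_le_right (ne_top_of_le_ne_top hn (le_of_add_le_right (hdecr n)))
            (hdecr n)
      _ ≤ u n - r * u n := tsub_le_tsub_left (hv n) _
      _ = (1 - r) * u n := by rw [ENNReal.sub_mul fun _ _ => hn, one_mul]
  have hgeom (n : ℕ) : u n ≤ (1 - r) ^ n * u 0 := by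
    induction n with
    | zero => simp
    | succ n ih => exact (hstep n).trans (by rw [pow_succ', mul_assoc]; gcongr)
  have hlim : Tendsto (fun n => (1 - r) ^ n * u 0) atTop (nhds 0) := by
    simpa using ENNReal.Tendsto.mul_const (ENNReal.tendsto_pow_atTop_nhds_zero_of_lt_one
      (ENNReal.sub_lt_self ENNReal.one_ne_top one_ne_zero hr)) (.inr hu)
  exact tendsto_of_tendsto_of_tendsto_of_le_of_le tendsto_const_nhds hlim (fun _ => zero_le)
    hgeom

theorem mul_self_le_self_of_nonneg_of_le_one {R : Type*} [Ring R] [StarRing R] [PartialOrder R]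
    [StarOrderedRing R] {a : R} (h0 : 0 ≤ a) (h1 : a ≤ 1) : a * a ≤ a := by
  have ha : IsSelfAdjoint a := .of_nonneg h0
  have hsplit : a - a * a = star a * (1 - a) * a + star (1 - a) * a * (1 - a) := by
    rw [ha.star_eq, ((IsSelfAdjoint.one R).sub ha).star_eq]
    noncomm_ring
  rw [← sub_nonneg, hsplit]
  exact add_nonneg (star_left_conjugate_nonneg (sub_nonneg.2 h1) a)
    (star_left_conjugate_nonneg h0 _)

section PositiveContraction

variable {H : Type*} [NormedAddCommGroup H] [InnerProductSpace ℂ H] [CompleteSpace H]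
  {T : H →L[ℂ] H}

theorem norm_apply_sq_le_re_inner_apply (h0 : 0 ≤ T) (h1 : T ≤ 1) (y : H) :
    ‖T y‖ ^ 2 ≤ re ⟪T y, y⟫_ℂ := by
  have hT : (T - T * T).IsPositive := by
    rw [← nonneg_iff_isPositive, sub_nonneg]
    exact mul_self_le_self_of_nonneg_of_le_one h0 h1
  have hsymm : ⟪T (T y), y⟫_ℂ = ⟪T y, T y⟫_ℂ :=
    ((nonneg_iff_isPositive T).1 h0).isSymmetric (T y) y
  have := hT.re_inner_nonneg_left y
  rw [sub_apply, inner_sub_left, map_sub, mul_apply_eq_comp, hsymm,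
    inner_self_eq_norm_sq] at this
  linarith

theorem norm_sub_apply_sq_add_norm_apply_sq_le (h0 : 0 ≤ T) (h1 : T ≤ 1) (y : H) :
    ‖y - T y‖ ^ 2 + ‖T y‖ ^ 2 ≤ ‖y‖ ^ 2 := by
  rw [norm_sub_sq (𝕜 := ℂ), inner_re_symm]
  linarith [norm_apply_sq_le_re_inner_apply h0 h1 y]

end PositiveContraction

section Residual

variable {Ω H : Type*} [NormedAddCommGroup H] [InnerProductSpace ℂ H]
  (Ψ : ℕ → Ω → (H →L[ℂ] H)) (ω : Ω) (x : H)

@[simp]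
theorem residualProd_zero_apply : residualProd Ψ ω 0 x = x := rfl

theorem residualProd_succ_apply (n : ℕ) :
    residualProd Ψ ω (n + 1) x = residualProd Ψ ω n x - Ψ (n + 1) ω (residualProd Ψ ω n x) := by
  simp [residualProd, mul_apply_eq_comp]

theorem sub_sum_Icc_eq_residualProd (n : ℕ) :
    x - ∑ k ∈ Finset.Icc 1 n, Ψ k ω (residualProd Ψ ω (k - 1) x) = residualProd Ψ ω n x := by
  induction n with
  | zero => simp
  | succ n ih =>
    rw [Finset.sum_Icc_succ_top (Nat.le_add_left 1 n), Nat.add_sub_cancel, ← sub_sub, ih,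
      residualProd_succ_apply]

end Residual

theorem lintegral_residualProd_succ_add_le {Ω H : Type*} [MeasurableSpace Ω] {μ : Measure Ω}
    [NormedAddCommGroup H] [InnerProductSpace ℂ H] [CompleteSpace H]
    {Ψ : ℕ → Ω → (H →L[ℂ] H)} (hpos : ∀ k ω, 0 ≤ Ψ k ω) (hcontr : ∀ k ω, Ψ k ω ≤ 1)
    (x : H) (n : ℕ) :
    ∫⁻ ω, ENNReal.ofReal (‖residualProd Ψ ω (n + 1) x‖ ^ 2) ∂μ
        + ∫⁻ ω, ENNReal.ofReal (‖Ψ (n + 1) ω (residualProd Ψ ω n x)‖ ^ 2) ∂μ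
      ≤ ∫⁻ ω, ENNReal.ofReal (‖residualProd Ψ ω n x‖ ^ 2) ∂μ := by
  refine le_lintegral_add _ _ |>.trans (lintegral_mono fun ω => ?_)
  rw [← ENNReal.ofReal_add (sq_nonneg _) (sq_nonneg _), residualProd_succ_apply]
  exact ENNReal.ofReal_le_ofReal
    (norm_sub_apply_sq_add_norm_apply_sq_le (hpos _ _) (hcontr _ _) _)

noncomputable local instance {H : Type*} [NormedAddCommGroup H] [InnerProductSpace ℂ H] :
    MeasurableSpace (H →L[ℂ] H) :=
  strongMS H

section StrongMeasurability

variable {H : Type*} [NormedAddCommGroup H] [InnerProductSpace ℂ H] [MeasurableSpace H]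
  [BorelSpace H]

theorem measurable_apply_strongMS (y : H) : Measurable fun T : H →L[ℂ] H => T y := by
  rw [measurable_iff_comap_le, BorelSpace.measurable_eq (α := H)]
  exact le_iSup (fun x : H => (borel H).comap fun T : H →L[ℂ] H => T x) y

theorem measurable_strongMS_iff {Ω : Type*} [MeasurableSpace Ω] {X : Ω → H →L[ℂ] H} :
    Measurable X ↔ ∀ y, Measurable fun ω => X ω y := by
  refine ⟨fun hX y => (measurable_apply_strongMS y).comp hX, fun hX => ?_⟩
  rw [measurable_iff_comap_le]
  change (strongMS H).comap X ≤ _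
  rw [strongMS, MeasurableSpace.comap_iSup, iSup_le_iff]
  intro y
  rw [MeasurableSpace.comap_comp, ← BorelSpace.measurable_eq]
  exact (hX y).comap_le

theorem measurable_apply_prod [TopologicalSpace.SeparableSpace H] :
    Measurable fun p : H × (H →L[ℂ] H) => p.2 p.1 :=
  measurable_uncurry_of_continuous_of_measurable (u := fun (y : H) (T : H →L[ℂ] H) => T y)
    (fun T => T.continuous) measurable_apply_strongMS

end StrongMeasurability

section Independence

variable {Ω H : Type*} {mΩ : MeasurableSpace Ω} [NormedAddCommGroup H] [InnerProductSpace ℂ H]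
  [MeasurableSpace H] [BorelSpace H] [TopologicalSpace.SeparableSpace H]
  {Ψ : ℕ → Ω → (H →L[ℂ] H)}

theorem measurable_residualProd_apply_iSup_comap (x : H) (n : ℕ) :
    Measurable[⨆ k ∈ Set.Iic n, MeasurableSpace.comap (Ψ k) inferInstance]
      fun ω => residualProd Ψ ω n x := by
  induction n with
  | zero => exact measurable_const
  | succ n ih =>
    set m : ℕ → MeasurableSpace Ω := fun n => ⨆ k ∈ Set.Iic n,
      MeasurableSpace.comap (Ψ k) inferInstance
    have hR : Measurable[m (n + 1)] fun ω => residualProd Ψ ω n x :=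
      ih.mono (biSup_mono fun k hk => Set.Iic_subset_Iic.2 n.le_succ hk) le_rfl
    have hΨ : Measurable[m (n + 1)] (Ψ (n + 1)) :=
      (comap_measurable (Ψ (n + 1))).mono
        (le_biSup (fun k => MeasurableSpace.comap (Ψ k) inferInstance) Set.self_mem_Iic) le_rfl
    simp only [residualProd_succ_apply]
    exact hR.sub (measurable_apply_prod.comp (hR.prodMk hΨ))

theorem measurable_residualProd_apply (hΨ : ∀ k, Measurable (Ψ k)) (x : H) (n : ℕ) :
    Measurable fun ω => residualProd Ψ ω n x :=
  (measurable_residualProd_apply_iSup_comap x n).mono (iSup₂_le fun k _ => (hΨ k).comap_le) le_rfl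

theorem indepFun_residualProd_apply {μ : Measure Ω} (hΨ : ∀ k, Measurable (Ψ k))
    (hindep : iIndepFun Ψ μ) (x : H) (n : ℕ) :
    IndepFun (fun ω => residualProd Ψ ω n x) (Ψ (n + 1)) μ := by
  have h := indep_iSup_of_disjoint (fun k => (hΨ k).comap_le) hindep.iIndep
    (S := Set.Iic n) (T := {n + 1}) (by simp)
  rw [iSup_singleton] at h
  rw [IndepFun_iff_Indep]
  exact indep_of_indep_of_le_left h (measurable_residualProd_apply_iSup_comap x n).comap_le

end Independence

section Coercivity

variable {Ω H : Type*} {mΩ : MeasurableSpace Ω} {μ : Measure Ω} [IsFiniteMeasure μ]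
  [NormedAddCommGroup H] [InnerProductSpace ℂ H] [MeasurableSpace H] [BorelSpace H]
  [TopologicalSpace.SeparableSpace H]

theorem ofReal_mul_lintegral_le_of_indepFun {X : Ω → H →L[ℂ] H} {Y : Ω → H}
    (hX : Measurable X) (hY : Measurable Y) (hXY : IndepFun Y X μ) {C : ℝ}
    (hcoer : ∀ y, C * ‖y‖ ^ 2 ≤ ∫ ω, ‖X ω y‖ ^ 2 ∂μ) :
    ENNReal.ofReal C * ∫⁻ ω, ENNReal.ofReal (‖Y ω‖ ^ 2) ∂μ
      ≤ ∫⁻ ω, ENNReal.ofReal (‖X ω (Y ω)‖ ^ 2) ∂μ := by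
  have hprod : μ.map (fun ω => (Y ω, X ω)) = (μ.map Y).prod (μ.map X) :=
    (indepFun_iff_map_prod_eq_prod_map_map hY.aemeasurable hX.aemeasurable).1 hXY
  have hf : Measurable fun p : H × (H →L[ℂ] H) => ENNReal.ofReal (‖p.2 p.1‖ ^ 2) :=
    (measurable_apply_prod.norm.pow_const 2).ennreal_ofReal
  have hfibre (y : H) : ENNReal.ofReal C * ENNReal.ofReal (‖y‖ ^ 2)
      ≤ ∫⁻ T, ENNReal.ofReal (‖T y‖ ^ 2) ∂μ.map X := by
    have hXy : Measurable fun ω => ‖X ω y‖ ^ 2 :=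
      ((measurable_apply_strongMS y).comp hX).norm.pow_const 2
    calc ENNReal.ofReal C * ENNReal.ofReal (‖y‖ ^ 2)
        = ENNReal.ofReal (C * ‖y‖ ^ 2) := (ENNReal.ofReal_mul' (sq_nonneg _)).symm
      _ ≤ ENNReal.ofReal (∫ ω, ‖X ω y‖ ^ 2 ∂μ) := ENNReal.ofReal_le_ofReal (hcoer y)
      _ ≤ ∫⁻ ω, ENNReal.ofReal (‖X ω y‖ ^ 2) ∂μ := by
        rw [integral_eq_lintegral_of_nonneg_ae (.of_forall fun ω => sq_nonneg _)
          hXy.aestronglyMeasurable]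
        exact ENNReal.ofReal_toReal_le
      _ = ∫⁻ T, ENNReal.ofReal (‖T y‖ ^ 2) ∂μ.map X :=
        (lintegral_map ((measurable_apply_strongMS y).norm.pow_const 2).ennreal_ofReal hX).symm
  calc ENNReal.ofReal C * ∫⁻ ω, ENNReal.ofReal (‖Y ω‖ ^ 2) ∂μ
      = ∫⁻ y, ENNReal.ofReal C * ENNReal.ofReal (‖y‖ ^ 2) ∂μ.map Y := by
        rw [lintegral_const_mul' _ _ ENNReal.ofReal_ne_top,
          lintegral_map (measurable_norm.pow_const 2).ennreal_ofReal hY]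
    _ ≤ ∫⁻ y, ∫⁻ T, ENNReal.ofReal (‖T y‖ ^ 2) ∂μ.map X ∂μ.map Y := lintegral_mono hfibre
    _ = ∫⁻ ω, ENNReal.ofReal (‖X ω (Y ω)‖ ^ 2) ∂μ := by
        rw [← lintegral_prod _ hf.aemeasurable, ← hprod, lintegral_map hf (hY.prodMk hX)]

end Coercivity

theorem meanSquare_convergence_general
    {Ω : Type*} [MeasureSpace Ω] [IsProbabilityMeasure (ℙ : Measure Ω)]
    {H : Type*} [NormedAddCommGroup H] [InnerProductSpace ℂ H]
    [CompleteSpace H] [TopologicalSpace.SeparableSpace H]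
    [MeasurableSpace H] [BorelSpace H]
    (Ψ : ℕ → Ω → (H →L[ℂ] H))
    (hmeas : ∀ k, ∀ x : H, Measurable fun ω => Ψ k ω x)
    (hpos : ∀ k ω, 0 ≤ Ψ k ω) (hcontr : ∀ k ω, Ψ k ω ≤ 1)
    (hindep : iIndepFun (m := fun _ : ℕ => strongMS H) Ψ (ℙ : Measure Ω))
    (C : ℝ) (hC0 : 0 < C)
    (hcoer : ∀ k, ∀ x : H, C * ‖x‖ ^ 2 ≤ ∫ ω : Ω, ‖Ψ k ω x‖ ^ 2 ∂(ℙ : Measure Ω))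
    (x : H) :
    Tendsto
      (fun n => ∫ ω : Ω,
        ‖x - ∑ k ∈ Finset.Icc 1 n, Ψ k ω (residualProd Ψ ω (k - 1) x)‖ ^ 2 ∂(ℙ : Measure Ω))
      atTop (nhds 0) := by
  have hΨ (k : ℕ) : Measurable (Ψ k) := measurable_strongMS_iff.2 (hmeas k)
  set L : ℕ → ℝ≥0∞ := fun n => ∫⁻ ω, ENNReal.ofReal (‖residualProd Ψ ω n x‖ ^ 2)
  have hL : Tendsto L atTop (nhds 0) :=
    ENNReal.tendsto_atTop_zero_of_add_le_of_mul_le (ENNReal.ofReal_pos.2 hC0).ne'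
      (by simp [L]) (lintegral_residualProd_succ_add_le hpos hcontr x)
      fun n => ofReal_mul_lintegral_le_of_indepFun (hΨ (n + 1))
        (measurable_residualProd_apply hΨ x n) (indepFun_residualProd_apply hΨ hindep x n)
        (hcoer (n + 1))
  have hint (n : ℕ) : ∫ ω, ‖x - ∑ k ∈ Finset.Icc 1 n, Ψ k ω (residualProd Ψ ω (k - 1) x)‖ ^ 2
      = (L n).toReal := by
    simp_rw [sub_sum_Icc_eq_residualProd]
    exact integral_eq_lintegral_of_nonneg_ae (.of_forall fun ω => sq_nonneg _)
      ((measurable_residualProd_apply hΨ x n).norm.pow_const 2).aestronglyMeasurable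
  simp only [hint]
  exact ENNReal.toReal_zero ▸ (ENNReal.tendsto_toReal ENNReal.zero_ne_top).comp hL

/-- For an i.i.d. sequence `(Ψ_k)` of strongly measurable random positive
contractions satisfying the coercivity condition with `0 < C < 1`, the partial sums
`Σ_{k=1}^n Ψ_k (I - Ψ_{k-1})⋯(I - Ψ₁) x` converge to `x` in `L²(Ω, H)`:
`lim_n 𝔼‖x - Σ_{k=1}^n Ψ_k (I - Ψ_{k-1})⋯(I - Ψ₁) x‖² = 0`. -/
theorem meanSquare_convergence
    {Ω : Type*} [MeasureSpace Ω] [IsProbabilityMeasure (ℙ : Measure Ω)]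
    {H : Type*} [NormedAddCommGroup H] [InnerProductSpace ℂ H]
    [CompleteSpace H] [TopologicalSpace.SeparableSpace H]
    [MeasurableSpace H] [BorelSpace H]
    (Ψ : ℕ → Ω → (H →L[ℂ] H))
    (hmeas : ∀ k, ∀ x : H, Measurable fun ω => Ψ k ω x)
    (hpos : ∀ k ω, 0 ≤ Ψ k ω) (hcontr : ∀ k ω, Ψ k ω ≤ 1)
    (hindep : iIndepFun (m := fun _ : ℕ => strongMS H) Ψ (ℙ : Measure Ω))
    (hident : ∀ i j : ℕ,
      @IdentDistrib Ω Ω (H →L[ℂ] H) _ _ (strongMS H) (Ψ i) (Ψ j) ℙ ℙ)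
    (C : ℝ) (hC0 : 0 < C) (hC1 : C < 1)
    (hcoer : ∀ k, ∀ x : H, C * ‖x‖ ^ 2 ≤ ∫ ω : Ω, ‖Ψ k ω x‖ ^ 2 ∂(ℙ : Measure Ω))
    (x : H) :
    Tendsto
      (fun n => ∫ ω : Ω,
        ‖x - ∑ k ∈ Finset.Icc 1 n, Ψ k ω (residualProd Ψ ω (k - 1) x)‖ ^ 2 ∂(ℙ : Measure Ω))
      atTop (nhds 0) :=
  meanSquare_convergence_general Ψ hmeas hpos hcontr hindep C hC0 hcoer x
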